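/- For all integers s > 1, Σ_{k=1}^{s-1} 2^{-2(s-k)} (1 - 2^{-2k}) [ζ(2k, 2s-2k) + ζ(2s-2k, 2k)] = (2^{-2s-1}/3)(4^s + 6s - 1) ζ(2s), where ζ(a,b) = Σ_{n=1}^∞ Σ_{m=1}^{n-1} 1/(n^a m^b) are double zeta values. -/

import Mathlib

set_option maxHeartbeats 1000000

open Finset PowerSeries Real

/-- The double zeta value ζ(a,b) = Σ_{n=1}^∞ Σ_{m=1}^{n-1} 1/(n^a m^b). -/
noncomputable def doubleZeta (a b : ℕ) : ℝ :=
  ∑' n : ℕ, ∑ m ∈ Finset.Ico 1 n, 1 / ((n : ℝ) ^ a * (m : ℝ) ^ b)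

noncomputable def Zr (a : ℕ) : ℝ := ∑' n : ℕ, 1 / (n : ℝ) ^ a

local notation "B" => bernoulliPowerSeries ℚ
local notation "E" => PowerSeries.exp ℚ



lemma my_derivative_exp : d⁄dX ℚ E = E := by
  ext n
  rw [PowerSeries.coeff_derivative, PowerSeries.coeff_exp, PowerSeries.coeff_exp]
  simp only [Algebra.algebraMap_self, RingHom.id_apply]
  rw [Nat.factorial_succ]
  push_cast
  have h1 : ((n.factorial : ℚ)) ≠ 0 := Nat.cast_ne_zero.mpr n.factorial_ne_zero
  have h2 : ((n : ℚ) + 1) ≠ 0 := by positivity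
  field_simp

lemma exp_sub_one_ne_zero : E - 1 ≠ 0 := by
  intro h
  have := congrArg (PowerSeries.coeff 1) h
  simp [PowerSeries.coeff_exp] at this

lemma exp_add_one_ne_zero : E + 1 ≠ 0 := by
  intro h
  have := congrArg (PowerSeries.constantCoeff) h
  simp [PowerSeries.constantCoeff_exp] at this

lemma hB : B * (E - 1) = X := bernoulliPowerSeries_mul_exp_sub_one ℚ

lemma hdB : (d⁄dX ℚ B) * (E - 1) = 1 - B * E := by
  have h := congrArg (d⁄dX ℚ) hB
  rw [Derivation.leibniz, map_sub, my_derivative_exp, PowerSeries.derivative_X,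
    Derivation.map_one_eq_zero, smul_eq_mul, smul_eq_mul] at h
  linear_combination h

lemma idI : B ^ 2 = (1 - X) * B - X * (d⁄dX ℚ B) := by
  refine mul_right_cancel₀ (pow_ne_zero 2 exp_sub_one_ne_zero) ?_
  linear_combination (B * (E - 1) + X - (1 - X) * (E - 1) - X * E) * hB
    + (X * (E - 1)) * hdB

lemma hC2 : (PowerSeries.C) 2 = (2 : ℚ⟦X⟧) := map_ofNat _ 2

lemma hB2 : (PowerSeries.rescale (2:ℚ) B) * (E ^ 2 - 1) = 2 * X := by
  have h2 : ((2:ℕ):ℚ) = 2 := by norm_num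
  rw [PowerSeries.exp_pow_eq_rescale_exp, h2,
    show (1:ℚ⟦X⟧) = PowerSeries.rescale (2:ℚ) 1 from (map_one _).symm,
    ← map_sub, ← map_mul, hB, PowerSeries.rescale_X, hC2]

lemma idII : 2 * ((PowerSeries.rescale (2:ℚ) B) * B)
    = 2 * B ^ 2 - X * (PowerSeries.rescale (2:ℚ) B) := by
  have hne : (E ^ 2 - 1 : ℚ⟦X⟧) ≠ 0 := by
    have : (E ^ 2 - 1 : ℚ⟦X⟧) = (E - 1) * (E + 1) := by ring
    rw [this]
    exact mul_ne_zero exp_sub_one_ne_zero exp_add_one_ne_zero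
  refine mul_right_cancel₀ hne ?_
  linear_combination (2 * B + X) * hB2 + (-2 * B * (E + 1) - 2 * X) * hB



lemma coeff_B (n : ℕ) : PowerSeries.coeff n B = bernoulli n / n.factorial := by
  simp [bernoulliPowerSeries]

lemma bernoulli_odd {n : ℕ} (h : Odd n) (h1 : n ≠ 1) : bernoulli n = 0 := by
  rw [bernoulli_eq_bernoulli'_of_ne_one h1]
  exact bernoulli'_eq_zero_of_odd h (by rcases h with ⟨m, rfl⟩; omega)

lemma coeff_B_sq (n : ℕ) : PowerSeries.coeff n (B ^ 2) =
    ∑ i ∈ range (n+1), (bernoulli i / i.factorial) *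
      (bernoulli (n-i) / (n-i).factorial) := by
  rw [pow_two, PowerSeries.coeff_mul, Finset.Nat.sum_antidiagonal_eq_sum_range_succ_mk]
  simp [coeff_B]

lemma sum_range_even (s : ℕ) (hs : 1 ≤ s) (f : ℕ → ℚ)
    (hf : ∀ i ≤ 2*s, Odd i → f i = 0) :
    ∑ i ∈ range (2*s+1), f i = f 0 + (∑ k ∈ Ico 1 s, f (2*k)) + f (2*s) := by
  have h1 : ∑ i ∈ range (2*s+1), f i = ∑ j ∈ (range (s+1)).image (fun j => 2*j), f j := by
    refine (Finset.sum_subset ?_ ?_).symm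
    · intro x hx
      simp only [Finset.mem_image, Finset.mem_range] at hx ⊢
      obtain ⟨j, hj, rfl⟩ := hx; omega
    · intro x hx hnx
      rcases Nat.even_or_odd x with he | ho
      · exfalso
        apply hnx
        rw [Finset.mem_image]
        obtain ⟨j, rfl⟩ := he
        exact ⟨j, Finset.mem_range.mpr (by simp only [Finset.mem_range] at hx; omega),
          by ring⟩
      · exact hf x (by simp only [Finset.mem_range] at hx; omega) ho
  rw [h1, Finset.sum_image (by intro a _ b _ h; simp only at h; omega)]
  rw [Finset.sum_range_succ, Finset.range_eq_Ico, Finset.sum_eq_sum_Ico_succ_bot hs]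

lemma q_sum_eq (s : ℕ) (hs : 2 ≤ s) :
    ∑ i ∈ range (2*s+1), (bernoulli i / i.factorial) *
      (bernoulli (2*s-i) / (2*s-i).factorial)
    = (1 - 2*s) * (bernoulli (2*s) / (2*s).factorial) := by
  have h := congrArg (PowerSeries.coeff (2*s)) idI
  rw [coeff_B_sq] at h
  rw [show ((1:ℚ⟦X⟧) - X) * B - X * (d⁄dX ℚ B) = B - (X * B + X * (d⁄dX ℚ B)) by ring] at h
  rw [map_sub, map_add] at h
  rw [show 2*s = (2*s-1)+1 by omega] at h
  rw [PowerSeries.coeff_succ_X_mul, PowerSeries.coeff_succ_X_mul,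
    PowerSeries.coeff_derivative, coeff_B, coeff_B] at h
  rw [show (2*s-1)+1 = 2*s by omega] at h
  rw [bernoulli_odd (show Odd (2*s-1) from ⟨s-1, by omega⟩) (by omega)] at h
  rw [Nat.cast_sub (by omega : 1 ≤ 2*s)] at h
  rw [h]
  push_cast
  ring

lemma q2_sum_eq (s : ℕ) (hs : 2 ≤ s) :
    ∑ i ∈ range (2*s+1), 2^i * ((bernoulli i / i.factorial) *
      (bernoulli (2*s-i) / (2*s-i).factorial))
    = (1 - 2*s) * (bernoulli (2*s) / (2*s).factorial) := by
  have h := congrArg (PowerSeries.coeff (2*s)) idII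
  rw [show (2:ℚ⟦X⟧) * ((PowerSeries.rescale (2:ℚ) B) * B)
      = (PowerSeries.C 2) * ((PowerSeries.rescale (2:ℚ) B) * B) by rw [map_ofNat],
    show (2:ℚ⟦X⟧) * B^2 = (PowerSeries.C 2) * B^2 by rw [map_ofNat]] at h
  rw [map_sub, PowerSeries.coeff_C_mul, PowerSeries.coeff_C_mul, PowerSeries.coeff_mul,
    Finset.Nat.sum_antidiagonal_eq_sum_range_succ_mk, coeff_B_sq, q_sum_eq s hs] at h
  rw [show 2*s = (2*s-1)+1 by omega] at h
  rw [PowerSeries.coeff_succ_X_mul, PowerSeries.coeff_rescale, coeff_B] at h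
  rw [show (2*s-1)+1 = 2*s by omega] at h
  rw [bernoulli_odd (show Odd (2*s-1) from ⟨s-1, by omega⟩) (by omega)] at h
  simp only [Nat.succ_eq_add_one, zero_div, mul_zero, sub_zero,
    PowerSeries.coeff_rescale, coeff_B] at h
  rw [show ∑ i ∈ range (2*s+1), 2^i * ((bernoulli i / i.factorial) *
      (bernoulli (2*s-i) / (2*s-i).factorial))
    = ∑ i ∈ range (2*s+1), (2:ℚ)^i * (bernoulli i / i.factorial) *
      (bernoulli (2*s-i) / (2*s-i).factorial) from
      Finset.sum_congr rfl (fun i _ => by ring)]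
  linarith [h]

lemma bsum1 (s : ℕ) (hs : 2 ≤ s) :
    ∑ k ∈ Ico 1 s, (bernoulli (2*k) / (2*k).factorial) *
      (bernoulli (2*(s-k)) / (2*(s-k)).factorial)
    = -(2*s+1) * (bernoulli (2*s) / (2*s).factorial) := by
  have key := sum_range_even s (by omega)
    (fun i => (bernoulli i / i.factorial) * (bernoulli (2*s-i) / (2*s-i).factorial))
    (fun i hi hodd => by
      rcases eq_or_ne i 1 with rfl | h1
      · rw [bernoulli_odd (show Odd (2*s-1) from ⟨s-1, by omega⟩) (by omega)]; ring
      · rw [bernoulli_odd hodd h1]; ring)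
  rw [q_sum_eq s hs] at key
  simp only [Nat.sub_zero, Nat.sub_self, bernoulli_zero, Nat.factorial_zero] at key
  have hc : ∑ k ∈ Ico 1 s, (bernoulli (2*k) / (2*k).factorial) *
      (bernoulli (2*(s-k)) / (2*(s-k)).factorial)
      = ∑ k ∈ Ico 1 s, (bernoulli (2*k) / (2*k).factorial) *
      (bernoulli (2*s-2*k) / (2*s-2*k).factorial) := by
    refine Finset.sum_congr rfl (fun k hk => ?_)
    rw [show 2*(s-k) = 2*s-2*k by omega]
  rw [hc]
  push_cast at key ⊢
  linarith [key]

lemma bsum2 (s : ℕ) (hs : 2 ≤ s) :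
    ∑ k ∈ Ico 1 s, (2:ℚ)^(2*k) * ((bernoulli (2*k) / (2*k).factorial) *
      (bernoulli (2*(s-k)) / (2*(s-k)).factorial))
    = -((2:ℚ)^(2*s) + 2*s) * (bernoulli (2*s) / (2*s).factorial) := by
  have key := sum_range_even s (by omega)
    (fun i => (2:ℚ)^i * ((bernoulli i / i.factorial) * (bernoulli (2*s-i) / (2*s-i).factorial)))
    (fun i hi hodd => by
      rcases eq_or_ne i 1 with rfl | h1
      · rw [bernoulli_odd (show Odd (2*s-1) from ⟨s-1, by omega⟩) (by omega)]; ring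
      · rw [bernoulli_odd hodd h1]; ring)
  rw [q2_sum_eq s hs] at key
  simp only [Nat.sub_zero, Nat.sub_self, bernoulli_zero, Nat.factorial_zero, pow_zero] at key
  have hc : ∑ k ∈ Ico 1 s, (2:ℚ)^(2*k) * ((bernoulli (2*k) / (2*k).factorial) *
      (bernoulli (2*(s-k)) / (2*(s-k)).factorial))
      = ∑ k ∈ Ico 1 s, (2:ℚ)^(2*k) * ((bernoulli (2*k) / (2*k).factorial) *
      (bernoulli (2*s-2*k) / (2*s-2*k).factorial)) := by
    refine Finset.sum_congr rfl (fun k hk => ?_)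
    rw [show 2*(s-k) = 2*s-2*k by omega]
  rw [hc]
  push_cast at key ⊢
  linarith [key]



lemma summable_Zr {a : ℕ} (ha : 2 ≤ a) : Summable (fun n : ℕ => 1 / (n : ℝ) ^ a) :=
  Real.summable_one_div_nat_pow.mpr (by omega)

lemma summable_H {a b : ℕ} (ha : 2 ≤ a) (hb : 2 ≤ b) :
    Summable (fun p : ℕ × ℕ => (1 / (p.1 : ℝ) ^ a) * (1 / (p.2 : ℝ) ^ b)) := by
  rw [summable_prod_of_nonneg (fun p => by positivity)]
  refine ⟨fun n => ?_, ?_⟩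
  · dsimp only
    exact (summable_Zr hb).mul_left _
  · dsimp only
    apply Summable.congr ((summable_Zr ha).mul_right (∑' m : ℕ, 1 / (m : ℝ) ^ b))
    intro n
    rw [tsum_mul_left]

lemma nonneg_H (a b : ℕ) (p : ℕ × ℕ) : 0 ≤ (1 / (p.1 : ℝ) ^ a) * (1 / (p.2 : ℝ) ^ b) := by
  positivity

lemma tsum_H {a b : ℕ} (ha : 2 ≤ a) (hb : 2 ≤ b) :
    ∑' p : ℕ × ℕ, (1 / (p.1 : ℝ) ^ a) * (1 / (p.2 : ℝ) ^ b) = Zr a * Zr b := by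
  simp only [Zr]
  rw [Summable.tsum_prod' (summable_H ha hb)
    (fun n => by dsimp only; exact (summable_Zr hb).mul_left _)]
  calc ∑' (n : ℕ) (m : ℕ), (1 / (n : ℝ) ^ a) * (1 / (m : ℝ) ^ b)
      = ∑' n : ℕ, (1 / (n : ℝ) ^ a) * (∑' m : ℕ, 1 / (m : ℝ) ^ b) := by
        refine tsum_congr fun n => ?_
        rw [tsum_mul_left]
    _ = _ := tsum_mul_right

lemma tsum_lt_eq {a b : ℕ} (ha : 2 ≤ a) (hb : 2 ≤ b) :
    ∑' p : ℕ × ℕ, (if p.2 < p.1 then (1 / (p.1 : ℝ) ^ a) * (1 / (p.2 : ℝ) ^ b) else 0)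
      = doubleZeta a b := by
  have hsum : Summable (fun p : ℕ × ℕ =>
      if p.2 < p.1 then (1 / (p.1 : ℝ) ^ a) * (1 / (p.2 : ℝ) ^ b) else 0) := by
    refine Summable.of_nonneg_of_le (fun p => ?_) (fun p => ?_) (summable_H ha hb)
    · split
      · exact nonneg_H a b p
      · exact le_rfl
    · split
      · exact le_rfl
      · exact nonneg_H a b p
  simp only [doubleZeta]
  rw [Summable.tsum_prod' hsum (fun n => summable_of_ne_finset_zero (s := Finset.range n)
    (fun m hm => if_neg (by simpa using hm)))]
  refine tsum_congr fun n => ?_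
  rw [tsum_eq_sum (s := Finset.range n) (fun m hm => if_neg (by simpa using hm))]
  rcases Nat.eq_zero_or_pos n with rfl | hn
  · simp
  rw [Finset.range_eq_Ico, Finset.sum_eq_sum_Ico_succ_bot hn]
  have h0 : (if (0:ℕ) < n then (1 / (n : ℝ) ^ a) * (1 / ((0:ℕ) : ℝ) ^ b) else 0) = 0 := by
    rw [if_pos hn]
    norm_num [zero_pow (by omega : b ≠ 0)]
  rw [h0, zero_add]
  refine Finset.sum_congr rfl fun m hm => ?_
  rw [if_pos (by simp only [Finset.mem_Ico] at hm; omega : m < n),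
    div_mul_div_comm, one_mul]

lemma tsum_gt_eq {a b : ℕ} (ha : 2 ≤ a) (hb : 2 ≤ b) :
    ∑' p : ℕ × ℕ, (if p.1 < p.2 then (1 / (p.1 : ℝ) ^ a) * (1 / (p.2 : ℝ) ^ b) else 0)
      = doubleZeta b a := by
  rw [← tsum_lt_eq hb ha]
  rw [← (Equiv.prodComm ℕ ℕ).tsum_eq]
  refine tsum_congr fun p => ?_
  simp only [Equiv.prodComm_apply, Prod.fst_swap, Prod.snd_swap]
  by_cases h : p.2 < p.1 <;> simp only [h, ↓reduceIte] <;> ring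

lemma tsum_diag_eq {a b : ℕ} (ha : 2 ≤ a) (hb : 2 ≤ b) :
    ∑' p : ℕ × ℕ, (if p.1 = p.2 then (1 / (p.1 : ℝ) ^ a) * (1 / (p.2 : ℝ) ^ b) else 0)
      = Zr (a + b) := by
  simp only [Zr]
  have hfg : ∀ n : ℕ, (if n = n then (1 / (n : ℝ) ^ a) * (1 / (n : ℝ) ^ b) else 0)
      = 1 / (n : ℝ) ^ (a + b) := by
    intro n
    rw [if_pos rfl, pow_add, ← one_div_mul_one_div]
  refine tsum_eq_tsum_of_ne_zero_bij (fun x => ((x : ℕ), (x : ℕ))) ?_ ?_ ?_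
  · intro x y hxy
    exact Subtype.ext (congrArg Prod.fst hxy)
  · rintro ⟨n, m⟩ hp
    simp only [Function.mem_support, ne_eq] at hp
    have hnm : n = m := by by_contra h; exact hp (if_neg h)
    subst hnm
    refine ⟨⟨n, ?_⟩, rfl⟩
    simp only [Function.mem_support, ne_eq]
    rw [← hfg n]
    exact hp
  · intro x
    exact hfg x

lemma stuffle {a b : ℕ} (ha : 2 ≤ a) (hb : 2 ≤ b) :
    doubleZeta a b + doubleZeta b a = Zr a * Zr b - Zr (a + b) := by
  have hH := summable_H ha hb
  set H := fun p : ℕ × ℕ => (1 / (p.1 : ℝ) ^ a) * (1 / (p.2 : ℝ) ^ b) with hHdef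
  set Flt := fun p : ℕ × ℕ => if p.2 < p.1 then H p else 0 with hFlt
  set Fgt := fun p : ℕ × ℕ => if p.1 < p.2 then H p else 0 with hFgt
  set Fd := fun p : ℕ × ℕ => if p.1 = p.2 then H p else 0 with hFd
  have hbound : ∀ (P : ℕ × ℕ → Prop) [DecidablePred P],
      Summable (fun p : ℕ × ℕ => if P p then H p else 0) := by
    intro P _
    refine Summable.of_nonneg_of_le (fun p => ?_) (fun p => ?_) hH
    · split
      · exact nonneg_H a b p
      · exact le_rfl
    · split
      · exact le_rfl
      · exact nonneg_H a b p
  have hslt : Summable Flt := hbound _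
  have hsgt : Summable Fgt := hbound _
  have hsd : Summable Fd := hbound _
  have hdecomp : ∀ p : ℕ × ℕ, H p = Flt p + Fgt p + Fd p := by
    intro p
    rcases lt_trichotomy p.1 p.2 with h | h | h
    · rw [hFlt, hFgt, hFd]
      simp only [if_pos h, if_neg (by omega : ¬ p.2 < p.1), if_neg (by omega : ¬ p.1 = p.2)]
      ring
    · rw [hFlt, hFgt, hFd]
      simp only [if_pos h, if_neg (by omega : ¬ p.2 < p.1), if_neg (by omega : ¬ p.1 < p.2)]
      ring
    · rw [hFlt, hFgt, hFd]
      simp only [if_pos h, if_neg (by omega : ¬ p.1 < p.2), if_neg (by omega : ¬ p.1 = p.2)]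
      ring
  have key : Zr a * Zr b = doubleZeta a b + doubleZeta b a + Zr (a + b) := by
    rw [← tsum_H ha hb]
    calc ∑' p, H p = ∑' p, (Flt p + Fgt p + Fd p) := tsum_congr hdecomp
      _ = (∑' p, (Flt p + Fgt p)) + ∑' p, Fd p := Summable.tsum_add (hslt.add hsgt) hsd
      _ = (∑' p, Flt p) + (∑' p, Fgt p) + ∑' p, Fd p := by rw [Summable.tsum_add hslt hsgt]
      _ = doubleZeta a b + doubleZeta b a + Zr (a + b) := by
          rw [hFlt, hFgt, hFd, hHdef]
          rw [tsum_lt_eq ha hb, tsum_gt_eq ha hb, tsum_diag_eq ha hb]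
  linarith [key]


lemma Zr_eq_zeta {a : ℕ} (ha : 2 ≤ a) : (Zr a : ℂ) = riemannZeta a := by
  rw [zeta_nat_eq_tsum_of_gt_one (by omega : 1 < a), Zr, Complex.ofReal_tsum]
  refine tsum_congr fun n => ?_
  push_cast
  rfl

theorem doubleZeta_sum_formula (s : ℕ) (hs : 1 < s) :
    ∑ k ∈ Finset.Ico 1 s,
        (1 / (2 : ℂ) ^ (2 * (s - k))) * (1 - 1 / (2 : ℂ) ^ (2 * k)) *
          ((doubleZeta (2 * k) (2 * s - 2 * k) : ℂ) +
            (doubleZeta (2 * s - 2 * k) (2 * k) : ℂ)) =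
      (1 / (3 * 2 ^ (2 * s + 1)) : ℂ) * (4 ^ s + 6 * s - 1) * riemannZeta (2 * s) := by
  have hs2 : 2 ≤ s := hs
  have hpi : (π : ℂ) ≠ 0 := Complex.ofReal_ne_zero.mpr Real.pi_ne_zero
  -- zeta value formula via Zr
  have hz : ∀ m : ℕ, m ≠ 0 → (Zr (2*m) : ℂ) =
      (-1) ^ (m + 1) * (2 : ℂ) ^ (2 * m - 1) * (π : ℂ) ^ (2 * m)
        * ((bernoulli (2 * m) : ℚ) : ℂ) / ((2 * m).factorial : ℂ) := by
    intro m hm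
    rw [Zr_eq_zeta (by omega), show (((2*m : ℕ)) : ℂ) = 2 * (m : ℂ) by push_cast; ring,
      riemannZeta_two_mul_nat hm]
  -- rewrite RHS zeta
  rw [show riemannZeta (2 * (s:ℂ)) = (Zr (2*s) : ℂ) by
    rw [Zr_eq_zeta (by omega), show (((2*s : ℕ)) : ℂ) = 2 * (s : ℂ) by push_cast; ring]]
  rw [hz s (by omega)]
  -- canonical per-term rewrite
  have hterm : ∀ k ∈ Ico 1 s,
      (1 / (2 : ℂ) ^ (2 * (s - k))) * (1 - 1 / (2 : ℂ) ^ (2 * k)) *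
          ((doubleZeta (2 * k) (2 * s - 2 * k) : ℂ) +
            (doubleZeta (2 * s - 2 * k) (2 * k) : ℂ))
      = (-1)^s * (π : ℂ)^(2*s) / 4 *
          (((2:ℂ)^(2*k) - 1) *
            ((((bernoulli (2*k) : ℚ) : ℂ) / ((2*k).factorial : ℂ)) *
             (((bernoulli (2*(s-k)) : ℚ) : ℂ) / ((2*(s-k)).factorial : ℂ))))
        + (-1)^s * (π : ℂ)^(2*s) *
            (((bernoulli (2*s) : ℚ) : ℂ) / ((2*s).factorial : ℂ)) / 2 *
          ((2:ℂ)^(2*k) - 1) := by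
    intro k hk
    rw [Finset.mem_Ico] at hk
    obtain ⟨hk1, hk2⟩ := hk
    rw [show 2 * s - 2 * k = 2 * (s - k) by omega]
    have hstuf : ((doubleZeta (2*k) (2*(s-k)) : ℝ) : ℂ) + ((doubleZeta (2*(s-k)) (2*k) : ℝ) : ℂ)
        = ((Zr (2*k) : ℝ) : ℂ) * ((Zr (2*(s-k)) : ℝ) : ℂ) - ((Zr (2*s) : ℝ) : ℂ) := by
      have h := stuffle (a := 2*k) (b := 2*(s-k)) (by omega) (by omega)
      rw [show 2*k + 2*(s-k) = 2*s by omega] at h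
      rw [← Complex.ofReal_add, h]
      push_cast
      ring
    rw [hstuf, hz k (by omega), hz (s-k) (by omega), hz s (by omega)]
    -- independent-atom rewrites
    have r1 : (2:ℂ)^(2*k-1) = (2:ℂ)^(2*k) / 2 := by
      rw [eq_div_iff (two_ne_zero), ← pow_succ]; congr 1; omega
    have r2 : (2:ℂ)^(2*(s-k)-1) = (2:ℂ)^(2*(s-k)) / 2 := by
      rw [eq_div_iff (two_ne_zero), ← pow_succ]; congr 1; omega
    have r3 : (2:ℂ)^(2*s-1) = (2:ℂ)^(2*k) * (2:ℂ)^(2*(s-k)) / 2 := by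
      rw [eq_div_iff (two_ne_zero), ← pow_add, ← pow_succ]; congr 1; omega
    have r4 : (2:ℂ)^(2*s) = (2:ℂ)^(2*k) * (2:ℂ)^(2*(s-k)) := by
      rw [← pow_add]; congr 1; omega
    have r5 : (π:ℂ)^(2*s) = (π:ℂ)^(2*k) * (π:ℂ)^(2*(s-k)) := by
      rw [← pow_add]; congr 1; omega
    have r6 : ((-1:ℂ))^s = (-1:ℂ)^(k+1) * (-1:ℂ)^(s-k+1) := by
      rw [← pow_add, show k + 1 + (s-k+1) = s + 2*1 by omega, pow_add, pow_mul]
      norm_num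
    rw [r1, r2, r3, show ((-1:ℂ))^(s+1) = (-1:ℂ)^s * (-1) from pow_succ _ _, r5, r6]
    have hfac1 : ((2*k).factorial : ℂ) ≠ 0 := Nat.cast_ne_zero.mpr (Nat.factorial_ne_zero _)
    have hfac2 : ((2*(s-k)).factorial : ℂ) ≠ 0 := Nat.cast_ne_zero.mpr (Nat.factorial_ne_zero _)
    have hfac3 : ((2*s).factorial : ℂ) ≠ 0 := Nat.cast_ne_zero.mpr (Nat.factorial_ne_zero _)
    have hp2k : ((2:ℂ))^(2*k) ≠ 0 := pow_ne_zero _ two_ne_zero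
    have hp2sk : ((2:ℂ))^(2*(s-k)) ≠ 0 := pow_ne_zero _ two_ne_zero
    clear r1 r2 r3 r4 r5 r6 hstuf
    generalize hA : (2:ℂ)^(2*k) = A at *
    generalize hBz : (2:ℂ)^(2*(s-k)) = Bz at *
    generalize hP1 : (π:ℂ)^(2*k) = P1
    generalize hP2 : (π:ℂ)^(2*(s-k)) = P2
    generalize hE1 : (-1:ℂ)^(k+1) = e1
    generalize hE2 : (-1:ℂ)^(s-k+1) = e2
    field_simp
    ring
  rw [Finset.sum_congr rfl hterm, Finset.sum_add_distrib, ← Finset.mul_sum, ← Finset.mul_sum]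
  -- the two sums
  have hQ : ∑ k ∈ Ico 1 s, ((2:ℂ)^(2*k) - 1) *
      ((((bernoulli (2*k) : ℚ) : ℂ) / ((2*k).factorial : ℂ)) *
       (((bernoulli (2*(s-k)) : ℚ) : ℂ) / ((2*(s-k)).factorial : ℂ)))
      = (1 - (2:ℂ)^(2*s)) * (((bernoulli (2*s) : ℚ) : ℂ) / ((2*s).factorial : ℂ)) := by
    have h1 := congrArg (fun q : ℚ => (q : ℂ)) (bsum1 s hs2)
    have h2 := congrArg (fun q : ℚ => (q : ℂ)) (bsum2 s hs2)
    push_cast at h1 h2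
    calc ∑ k ∈ Ico 1 s, ((2:ℂ)^(2*k) - 1) *
        ((((bernoulli (2*k) : ℚ) : ℂ) / ((2*k).factorial : ℂ)) *
         (((bernoulli (2*(s-k)) : ℚ) : ℂ) / ((2*(s-k)).factorial : ℂ)))
        = (∑ k ∈ Ico 1 s, (2:ℂ)^(2*k) *
            ((((bernoulli (2*k) : ℚ) : ℂ) / ((2*k).factorial : ℂ)) *
             (((bernoulli (2*(s-k)) : ℚ) : ℂ) / ((2*(s-k)).factorial : ℂ))))
          - ∑ k ∈ Ico 1 s,
            ((((bernoulli (2*k) : ℚ) : ℂ) / ((2*k).factorial : ℂ)) *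
             (((bernoulli (2*(s-k)) : ℚ) : ℂ) / ((2*(s-k)).factorial : ℂ))) := by
          rw [← Finset.sum_sub_distrib]
          exact Finset.sum_congr rfl fun k _ => by ring
      _ = (1 - (2:ℂ)^(2*s)) * (((bernoulli (2*s) : ℚ) : ℂ) / ((2*s).factorial : ℂ)) := by
          rw [h1, h2]; ring
  have hG : ∑ k ∈ Ico 1 s, ((2:ℂ)^(2*k) - 1)
      = ((2:ℂ)^(2*s) - 4) / 3 - ((s:ℂ) - 1) := by
    have h4 : ∀ k : ℕ, (2:ℂ)^(2*k) = (4:ℂ)^k := by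
      intro k; rw [pow_mul]; norm_num
    calc ∑ k ∈ Ico 1 s, ((2:ℂ)^(2*k) - 1)
        = (∑ k ∈ Ico 1 s, (4:ℂ)^k) - (∑ k ∈ Ico 1 s, (1:ℂ)) := by
          rw [← Finset.sum_sub_distrib]
          exact Finset.sum_congr rfl fun k _ => by rw [h4]
      _ = ((4:ℂ)^s - 4^1) / (4 - 1) - ((s:ℂ) - 1) := by
          rw [geom_sum_Ico (by norm_num : (4:ℂ) ≠ 1) (by omega : 1 ≤ s)]
          rw [Finset.sum_const, Nat.card_Ico, nsmul_eq_mul, mul_one,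
            Nat.cast_sub (by omega : 1 ≤ s), Nat.cast_one]
      _ = ((2:ℂ)^(2*s) - 4) / 3 - ((s:ℂ) - 1) := by rw [h4]; norm_num
  rw [hQ, hG]
  -- final arithmetic
  have hps : (4:ℂ)^s = (2:ℂ)^(2*s) := by rw [pow_mul]; norm_num
  have hp1 : (2:ℂ)^(2*s+1) = (2:ℂ)^(2*s) * 2 := by rw [pow_succ]
  have r3 : (2:ℂ)^(2*s-1) = (2:ℂ)^(2*s) / 2 := by
    rw [eq_div_iff (two_ne_zero), ← pow_succ]; congr 1; omega
  rw [hps, hp1, r3]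
  have hp2s : ((2:ℂ))^(2*s) ≠ 0 := pow_ne_zero _ two_ne_zero
  have hfac3 : ((2*s).factorial : ℂ) ≠ 0 := Nat.cast_ne_zero.mpr (Nat.factorial_ne_zero _)
  field_simp
  ring
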